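/- arXiv:2003.06836 — 2 statements merged into one kernel-verified Lean document; each statement's English description precedes it below -/
import Mathlib

section
/- With the same definitions, Γ(1,n;k) = Σ_{s=0}^{k-1} (-1)^{k+s-1} binomial(n-2k+s, s) b_{n-k+s+1} + Σ_{r=0}^{k-1} (-1)^{k+r} binomial(n-2k+r, r) b_{k-r}. -/
noncomputable section

open RatFunc Finset

/-- The index set J(h,k,r) = {(j₁,…,j_r) : h < j₁ < j₂ - 1 < ⋯ < j_r - (r-1) ≤ k}. -/
def Jset (h k r : ℕ) : Finset (Fin r → Fin (k + 1)) :=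
  Finset.univ.filter fun j =>
    (∀ s : Fin r, h < (j s : ℕ) ∧ (j s : ℕ) ≤ k) ∧
    ∀ s t : Fin r, (s : ℕ) + 1 = (t : ℕ) → (j s : ℕ) + 2 ≤ (j t : ℕ)

/-- Γ(h,k;r) = Σ_{j ∈ J(h,k,r)} (q+1) Σ_{s=1}^r (q^{2(j_s-1)} + q^{-2(j_s-1)}). -/
def Gam (h k r : ℕ) : RatFunc ℚ :=
  ∑ j ∈ Jset h k r, ((X : RatFunc ℚ) + 1) *
    ∑ s : Fin r, ((X : RatFunc ℚ) ^ (2 * ((j s : ℕ) : ℤ) - 2) + X ^ (2 - 2 * ((j s : ℕ) : ℤ)))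

/-- b_m(q) = (q+1) q^{2-2m} (1 - q^{4m-2})/(1-q^2). -/
def bRF (m : ℤ) : RatFunc ℚ :=
  ((X : RatFunc ℚ) + 1) * X ^ (2 - 2 * m) * (1 - X ^ (4 * m - 2)) / (1 - X ^ (2 : ℤ))

lemma X_pow_ne_one : (X : RatFunc ℚ) ^ (2:ℤ) ≠ 1 := by
  intro h2
  have h3 : (X:RatFunc ℚ) ^ (2:ℕ) = 1 := by rw [← zpow_natCast]; exact_mod_cast h2
  have h4 := congrArg RatFunc.intDegree h3
  rw [RatFunc.intDegree_one] at h4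
  have h5 : ((X : RatFunc ℚ)^(2:ℕ)).intDegree = 2 * (X:RatFunc ℚ).intDegree := by
    rw [pow_two, RatFunc.intDegree_mul RatFunc.X_ne_zero RatFunc.X_ne_zero]; ring
  rw [h5, RatFunc.intDegree_X] at h4
  omega

lemma one_sub_X_sq_ne : (1 : RatFunc ℚ) - X ^ (2:ℤ) ≠ 0 := by
  intro h
  exact X_pow_ne_one (by linear_combination -h)

lemma bRF_diff (m : ℤ) : bRF m - bRF (m - 1) =
    ((X : RatFunc ℚ) + 1) * ((X:RatFunc ℚ) ^ (2*m - 2) + X ^ (2 - 2*m)) := by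
  have hX : (X : RatFunc ℚ) ≠ 0 := RatFunc.X_ne_zero
  unfold bRF
  rw [div_sub_div_same, div_eq_iff one_sub_X_sq_ne]
  have g1 : ((2:ℤ) - 2*m) + (4*m - 2) = 2*m := by ring
  have E1 : (X:RatFunc ℚ)^(2 - 2*m) * X^(4*m - 2) = X^(2*m) := by
    rw [← zpow_add₀ hX, g1]
  have g2 : ((2:ℤ) - 2*(m-1)) + (4*(m-1) - 2) = 2*m - 2 := by ring
  have E2 : (X:RatFunc ℚ)^(2 - 2*(m-1)) * X^(4*(m-1) - 2) = X^(2*m - 2) := by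
    rw [← zpow_add₀ hX, g2]
  have g3 : ((2:ℤ)*m - 2) + 2 = 2*m := by ring
  have E3 : (X:RatFunc ℚ)^(2*m - 2) * X^(2:ℤ) = X^(2*m) := by
    rw [← zpow_add₀ hX, g3]
  have g4 : ((2:ℤ) - 2*m) + 2 = 4 - 2*m := by ring
  have E4 : (X:RatFunc ℚ)^(2 - 2*m) * X^(2:ℤ) = X^(4 - 2*m) := by
    rw [← zpow_add₀ hX, g4]
  have g5 : ((2:ℤ) - 2*(m-1)) = 4 - 2*m := by ring
  have E5 : (X:RatFunc ℚ)^(2 - 2*(m-1)) = X^(4 - 2*m) := by rw [g5]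
  linear_combination ((X:RatFunc ℚ) + 1) * (E2 + E3 + E4 - E1 - E5)


lemma part1 (B : ℕ → RatFunc ℚ) (k a' : ℕ) :
    (∑ s ∈ range (k+1), (-1:RatFunc ℚ)^(k+s) * (Nat.choose (a'+1+s) s) * B (k+(a'+1)+s+2))
    - (∑ s ∈ range (k+1), (-1:RatFunc ℚ)^(k+s) * (Nat.choose (a'+s) s) * B (k+(a'+1)+s+1))
    + (∑ s ∈ range k, (-1:RatFunc ℚ)^(k+s) * (Nat.choose (a'+1+s) s) * B (k+(a'+1)+s+1))
    = (Nat.choose (a'+1+k) k) * (B (2*k+(a'+1)+2) - B (2*k+(a'+1)+1)) := by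
  set a := a' + 1 with ha
  have h1 : (∑ s ∈ range (k+1), (-1:RatFunc ℚ)^(k+s) * (Nat.choose (a+s) s) * B (k+a+s+2))
      = (∑ s ∈ range k, (-1:RatFunc ℚ)^(k+s) * (Nat.choose (a+s) s) * B (k+a+s+2))
        + (-1:RatFunc ℚ)^(k+k) * (Nat.choose (a+k) k) * B (k+a+k+2) :=
    Finset.sum_range_succ _ _
  -- W - U = Σ w, and Σ w = - Σ_{range k} t
  have h2 : (∑ s ∈ range (k+1), (-1:RatFunc ℚ)^(k+s) * ((Nat.choose (a+s) s : RatFunc ℚ) - (Nat.choose (a'+s) s)) * B (k+a+s+1))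
      = ∑ s ∈ range k, -((-1:RatFunc ℚ)^(k+s) * (Nat.choose (a+s) s) * B (k+a+s+2)) := by
    rw [Finset.sum_range_succ']
    have h0 : (-1:RatFunc ℚ)^(k+0) * ((Nat.choose (a+0) 0 : RatFunc ℚ) - (Nat.choose (a'+0) 0)) * B (k+a+0+1) = 0 := by
      simp
    rw [h0, add_zero]
    refine Finset.sum_congr rfl fun s hs => ?_
    have hc : (Nat.choose (a+(s+1)) (s+1) : RatFunc ℚ) - (Nat.choose (a'+(s+1)) (s+1)) = (Nat.choose (a+s) s : RatFunc ℚ) := by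
      have hn : Nat.choose (a+(s+1)) (s+1) = Nat.choose (a'+s+1) s + Nat.choose (a'+(s+1)) (s+1) := by
        have : a + (s+1) = (a'+s+1) + 1 := by omega
        rw [this, Nat.choose_succ_succ']
        rfl
      rw [hn]
      push_cast
      have : a' + s + 1 = a + s := by omega
      rw [this]
      ring
    rw [hc]
    have harg : k+a+(s+1)+1 = k+a+s+2 := by omega
    rw [harg]
    ring
  have h5 : (∑ s ∈ range (k+1), (-1:RatFunc ℚ)^(k+s) * ((Nat.choose (a+s) s : RatFunc ℚ) - (Nat.choose (a'+s) s)) * B (k+a+s+1))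
      = (∑ s ∈ range (k+1), (-1:RatFunc ℚ)^(k+s) * (Nat.choose (a+s) s) * B (k+a+s+1))
        - (∑ s ∈ range (k+1), (-1:RatFunc ℚ)^(k+s) * (Nat.choose (a'+s) s) * B (k+a+s+1)) := by
    rw [← Finset.sum_sub_distrib]
    exact Finset.sum_congr rfl fun s _ => by ring
  have h4 : (∑ s ∈ range (k+1), (-1:RatFunc ℚ)^(k+s) * (Nat.choose (a+s) s) * B (k+a+s+1))
      = (∑ s ∈ range k, (-1:RatFunc ℚ)^(k+s) * (Nat.choose (a+s) s) * B (k+a+s+1))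
        + (-1:RatFunc ℚ)^(k+k) * (Nat.choose (a+k) k) * B (k+a+k+1) :=
    Finset.sum_range_succ _ _
  have h2' := h2
  rw [Finset.sum_neg_distrib] at h2'
  have hsign : (-1:RatFunc ℚ)^(k+k) = 1 := by
    rw [← two_mul, pow_mul]; norm_num
  have e1 : k+a+k+2 = 2*k+a+2 := by omega
  have e2 : k+a+k+1 = 2*k+a+1 := by omega
  rw [hsign, e1, one_mul] at h1
  rw [hsign, e2, one_mul] at h4
  linear_combination h1 - h5 - h4 + h2'

lemma part2 (B : ℕ → RatFunc ℚ) (k a' : ℕ) :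
    (∑ r ∈ range (k+1), (-1:RatFunc ℚ)^(k+r+1) * (Nat.choose (a'+1+r) r) * B (k+1-r))
    - (∑ r ∈ range (k+1), (-1:RatFunc ℚ)^(k+r+1) * (Nat.choose (a'+r) r) * B (k+1-r))
    + (∑ r ∈ range k, (-1:RatFunc ℚ)^(k+r+1) * (Nat.choose (a'+1+r) r) * B (k-r)) = 0 := by
  set a := a' + 1 with ha
  have h5 : (∑ r ∈ range (k+1), (-1:RatFunc ℚ)^(k+r+1) * ((Nat.choose (a+r) r : RatFunc ℚ) - (Nat.choose (a'+r) r)) * B (k+1-r))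
      = (∑ r ∈ range (k+1), (-1:RatFunc ℚ)^(k+r+1) * (Nat.choose (a+r) r) * B (k+1-r))
        - (∑ r ∈ range (k+1), (-1:RatFunc ℚ)^(k+r+1) * (Nat.choose (a'+r) r) * B (k+1-r)) := by
    rw [← Finset.sum_sub_distrib]
    exact Finset.sum_congr rfl fun s _ => by ring
  have h2 : (∑ r ∈ range (k+1), (-1:RatFunc ℚ)^(k+r+1) * ((Nat.choose (a+r) r : RatFunc ℚ) - (Nat.choose (a'+r) r)) * B (k+1-r))
      = ∑ r ∈ range k, -((-1:RatFunc ℚ)^(k+r+1) * (Nat.choose (a+r) r) * B (k-r)) := by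
    rw [Finset.sum_range_succ']
    have h0 : (-1:RatFunc ℚ)^(k+0+1) * ((Nat.choose (a+0) 0 : RatFunc ℚ) - (Nat.choose (a'+0) 0)) * B (k+1-0) = 0 := by
      simp
    rw [h0, add_zero]
    refine Finset.sum_congr rfl fun r hr => ?_
    have hc : (Nat.choose (a+(r+1)) (r+1) : RatFunc ℚ) - (Nat.choose (a'+(r+1)) (r+1)) = (Nat.choose (a+r) r : RatFunc ℚ) := by
      have hn : Nat.choose (a+(r+1)) (r+1) = Nat.choose (a'+r+1) r + Nat.choose (a'+(r+1)) (r+1) := by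
        have : a + (r+1) = (a'+r+1) + 1 := by omega
        rw [this, Nat.choose_succ_succ']
        rfl
      rw [hn]
      push_cast
      have : a' + r + 1 = a + r := by omega
      rw [this]
      ring
    rw [hc]
    have harg : k+1-(r+1) = k-r := by omega
    rw [harg]
    ring
  have h2' := h2
  rw [Finset.sum_neg_distrib] at h2'
  linear_combination h2' - h5

lemma part3 (B : ℕ → RatFunc ℚ) (k : ℕ) :
    (∑ s ∈ range (k+1), (-1:RatFunc ℚ)^(k+s) * B (k+s+2))
    + (∑ r ∈ range (k+1), (-1:RatFunc ℚ)^(k+r+1) * B (k+1-r))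
    = (∑ s ∈ range k, (-1:RatFunc ℚ)^(k+s+1) * B (k+s+1))
      + (∑ r ∈ range k, (-1:RatFunc ℚ)^(k+r) * B (k-r))
      + B (2*k+2) - B (2*k+1) := by
  have hsign : (-1:RatFunc ℚ)^(k+k) = 1 := by
    rw [← two_mul, pow_mul]; norm_num
  have h1 : (∑ s ∈ range (k+1), (-1:RatFunc ℚ)^(k+s) * B (k+s+2))
      = (∑ s ∈ range k, (-1:RatFunc ℚ)^(k+s) * B (k+s+2)) + (-1:RatFunc ℚ)^(k+k) * B (k+k+2) :=
    Finset.sum_range_succ _ _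
  -- middle sum: Σ_{range k} (-1)^(k+s) B(k+s+2) = -Σ_{range k} c(s+1) where c s = (-1)^(k+s)B(k+s+1)
  have h2 : (∑ s ∈ range (k+1), (-1:RatFunc ℚ)^(k+s) * B (k+s+1))
      = (∑ s ∈ range k, -((-1:RatFunc ℚ)^(k+s) * B (k+s+2))) + (-1:RatFunc ℚ)^(k+0) * B (k+0+1) := by
    rw [Finset.sum_range_succ']
    congr 1
    refine Finset.sum_congr rfl fun s hs => ?_
    have harg : k+(s+1)+1 = k+s+2 := by omega
    rw [harg]
    ring
  have h3 : (∑ s ∈ range (k+1), (-1:RatFunc ℚ)^(k+s) * B (k+s+1))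
      = (∑ s ∈ range k, (-1:RatFunc ℚ)^(k+s) * B (k+s+1)) + (-1:RatFunc ℚ)^(k+k) * B (k+k+1) :=
    Finset.sum_range_succ _ _
  have h4 : (∑ r ∈ range (k+1), (-1:RatFunc ℚ)^(k+r+1) * B (k+1-r))
      = (∑ r ∈ range k, (-1:RatFunc ℚ)^(k+r) * B (k-r)) + (-1:RatFunc ℚ)^(k+0+1) * B (k+1-0) := by
    rw [Finset.sum_range_succ']
    congr 1
    refine Finset.sum_congr rfl fun r hr => ?_
    have harg : k+1-(r+1) = k-r := by omega
    rw [harg]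
    ring
  have h5 : (∑ s ∈ range k, (-1:RatFunc ℚ)^(k+s+1) * B (k+s+1))
      = ∑ s ∈ range k, -((-1:RatFunc ℚ)^(k+s) * B (k+s+1)) := by
    refine Finset.sum_congr rfl fun s hs => ?_
    rw [pow_succ]
    ring
  rw [Finset.sum_neg_distrib] at h2
  rw [Finset.sum_neg_distrib] at h5
  have e1 : k+k+2 = 2*k+2 := by omega
  have e2 : k+k+1 = 2*k+1 := by omega
  rw [hsign, e1, one_mul] at h1
  rw [hsign, e2, one_mul] at h3
  simp only [Nat.add_zero, Nat.sub_zero] at h2 h4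
  linear_combination h1 + h4 - h5 + h2 - h3

lemma mem_Jset {h n k : ℕ} {j : Fin k → Fin (n+1)} :
    j ∈ Jset h n k ↔ (∀ s : Fin k, h < (j s : ℕ) ∧ (j s : ℕ) ≤ n) ∧
      ∀ s t : Fin k, (s : ℕ) + 1 = (t : ℕ) → (j s : ℕ) + 2 ≤ (j t : ℕ) := by
  simp [Jset]

lemma Jchain {k N : ℕ} {j : Fin k → Fin N}
    (hj : ∀ s t : Fin k, (s:ℕ)+1 = (t:ℕ) → (j s:ℕ)+2 ≤ (j t:ℕ)) :
    ∀ (d : ℕ) (s t : Fin k), (s:ℕ) + d = (t:ℕ) → (j s:ℕ) + 2*d ≤ (j t:ℕ) := by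
  intro d
  induction d with
  | zero =>
    intro s t hst
    have : s = t := Fin.ext (by omega)
    subst this
    omega
  | succ d ih =>
    intro s t hst
    have hu : (s:ℕ) + d < k := by have := t.isLt; omega
    have h1 := ih s ⟨(s:ℕ)+d, hu⟩ rfl
    have h2 := hj ⟨(s:ℕ)+d, hu⟩ t (by simp; omega)
    omega

lemma Jset_empty {n k : ℕ} (hnk : n < 2*(k+1)) : Jset 1 n (k+1) = ∅ := by
  rw [Finset.eq_empty_iff_forall_notMem]
  intro j hj
  obtain ⟨hc1, hc2⟩ := mem_Jset.mp hj
  have h0 : (1:ℕ) < (j ⟨0, Nat.succ_pos k⟩ : ℕ) := (hc1 _).1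
  have hch := Jchain hc2 k ⟨0, Nat.succ_pos k⟩ (Fin.last k) (by simp)
  have hlt : ((j (Fin.last k)) : ℕ) ≤ n := (hc1 _).2
  omega

lemma sum_split (m k : ℕ) (w : ℕ → RatFunc ℚ) :
    ∑ j ∈ Jset 1 (m+2) (k+1), (∑ s, w ((j s : ℕ)))
    = (∑ j ∈ Jset 1 (m+1) (k+1), (∑ s, w ((j s : ℕ))))
      + (∑ j ∈ Jset 1 m k, (∑ s, w ((j s : ℕ))))
      + ((Jset 1 m k).card : RatFunc ℚ) * w (m+2) := by
  classical
  have boundA : ∀ j ∈ (Jset 1 (m+2) (k+1)).filter (fun j => ((j (Fin.last k) : ℕ) < m+2)),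
      ∀ s : Fin (k+1), (j s : ℕ) < m + 2 := by
    intro j hj s
    rw [Finset.mem_filter] at hj
    obtain ⟨hmem, hp⟩ := hj
    obtain ⟨hc1, hc2⟩ := mem_Jset.mp hmem
    have hd : (s:ℕ) + (k - (s:ℕ)) = ((Fin.last k : Fin (k+1)) : ℕ) := by
      have := s.isLt
      simp [Fin.val_last]
      omega
    have := Jchain hc2 (k - (s:ℕ)) s (Fin.last k) hd
    omega
  have hA : ∑ j ∈ (Jset 1 (m+2) (k+1)).filter (fun j => ((j (Fin.last k) : ℕ) < m+2)),
      (∑ s, w ((j s : ℕ)))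
      = ∑ j ∈ Jset 1 (m+1) (k+1), (∑ s, w ((j s : ℕ))) := by
    refine Finset.sum_bij' (fun j hj => fun s => (⟨(j s : ℕ), boundA j hj s⟩ : Fin (m+2)))
      (fun i _ => fun s => Fin.castSucc (i s)) ?_ ?_ ?_ ?_ ?_
    · intro j hj
      rw [Finset.mem_filter] at hj
      obtain ⟨hmem, hp⟩ := hj
      obtain ⟨hc1, hc2⟩ := mem_Jset.mp hmem
      rw [mem_Jset]
      constructor
      · intro s
        have h1 := (hc1 s).1
        have h2 := boundA j (by rw [Finset.mem_filter]; exact ⟨hmem, hp⟩) s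
        simp only [Fin.val_mk]
        omega
      · intro s t hst
        have := hc2 s t hst
        simpa using this
    · intro i hi
      obtain ⟨hc1, hc2⟩ := mem_Jset.mp hi
      rw [Finset.mem_filter]
      constructor
      · rw [mem_Jset]
        constructor
        · intro s
          have h1 := (hc1 s).1
          have h2 := (hc1 s).2
          simp only [Fin.coe_castSucc]
          omega
        · intro s t hst
          simpa using hc2 s t hst
      · have h1 := (hc1 (Fin.last k)).2
        simp only [Fin.coe_castSucc]
        omega
    · intro j hj
      funext s
      apply Fin.ext
      simp
    · intro i hi
      funext s
      apply Fin.ext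
      simp
    · intro j hj
      rfl
  have hlast : ∀ j ∈ (Jset 1 (m+2) (k+1)).filter
      (fun j => ¬((j (Fin.last k) : ℕ) < m+2)), (j (Fin.last k) : ℕ) = m + 2 := by
    intro j hj
    rw [Finset.mem_filter] at hj
    have := (j (Fin.last k)).isLt
    omega
  have boundB : ∀ j ∈ (Jset 1 (m+2) (k+1)).filter
      (fun j => ¬((j (Fin.last k) : ℕ) < m+2)),
      ∀ s : Fin k, (j (Fin.castSucc s) : ℕ) < m + 1 := by
    intro j hj s
    have hl := hlast j hj
    rw [Finset.mem_filter] at hj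
    obtain ⟨hmem, hp⟩ := hj
    obtain ⟨hc1, hc2⟩ := mem_Jset.mp hmem
    have hd : ((Fin.castSucc s : Fin (k+1)) : ℕ) + (k - (s:ℕ)) = ((Fin.last k : Fin (k+1)) : ℕ) := by
      have := s.isLt
      simp [Fin.val_last]
    have := Jchain hc2 (k - (s:ℕ)) (Fin.castSucc s) (Fin.last k) hd
    have hs := s.isLt
    omega
  have hB : ∑ j ∈ (Jset 1 (m+2) (k+1)).filter (fun j => ¬((j (Fin.last k) : ℕ) < m+2)),
      (∑ s, w ((j s : ℕ)))
      = ∑ i ∈ Jset 1 m k, ((∑ s, w ((i s : ℕ))) + w (m+2)) := by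
    refine Finset.sum_bij'
      (fun j hj => fun s => (⟨(j (Fin.castSucc s) : ℕ), boundB j hj s⟩ : Fin (m+1)))
      (fun i _ => Fin.snoc (fun s => Fin.castLE (by omega) (i s)) (⟨m+2, by omega⟩ : Fin (m+3)))
      ?_ ?_ ?_ ?_ ?_
    · intro j hj
      have hmem' := hj
      rw [Finset.mem_filter] at hmem'
      obtain ⟨hmem, hp⟩ := hmem'
      obtain ⟨hc1, hc2⟩ := mem_Jset.mp hmem
      rw [mem_Jset]
      constructor
      · intro s
        have h1 := (hc1 (Fin.castSucc s)).1
        have h2 := boundB j hj s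
        simp only [Fin.val_mk]
        omega
      · intro s t hst
        have hvv : ((Fin.castSucc s : Fin (k+1)) : ℕ) + 1 = ((Fin.castSucc t : Fin (k+1)) : ℕ) := by
          simpa using hst
        simpa using hc2 _ _ hvv
    · intro i hi
      obtain ⟨hc1, hc2⟩ := mem_Jset.mp hi
      rw [Finset.mem_filter]
      refine ⟨?_, by simp [Fin.snoc_last]⟩
      rw [mem_Jset]
      constructor
      · intro s
        refine Fin.lastCases ?_ ?_ s
        · simp [Fin.snoc_last]
        · intro s'
          have h1 := (hc1 s').1
          have h2 := (hc1 s').2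
          simp only [Fin.snoc_castSucc, Fin.coe_castLE]
          omega
      · intro s t hst
        rcases Fin.eq_castSucc_or_eq_last t with ⟨t', rfl⟩ | rfl
        · have hsv : (s:ℕ) < k := by
            have := t'.isLt
            simp only [Fin.coe_castSucc] at hst
            omega
          have hseq : s = Fin.castSucc ⟨(s:ℕ), hsv⟩ := Fin.ext (by simp)
          rw [hseq]
          have hvv : ((⟨(s:ℕ), hsv⟩ : Fin k) : ℕ) + 1 = ((t' : Fin k) : ℕ) := by
            simp only [Fin.coe_castSucc] at hst
            simpa using hst
          have := hc2 _ _ hvv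
          simp only [Fin.snoc_castSucc, Fin.coe_castLE]
          omega
        · rcases Nat.eq_zero_or_pos k with rfl | hk
          · exact absurd hst (by simp)
          · have hsv : (s:ℕ) < k := by
              simp only [Fin.val_last] at hst
              omega
            have hseq : s = Fin.castSucc ⟨(s:ℕ), hsv⟩ := Fin.ext (by simp)
            rw [hseq]
            have h2 := (hc1 ⟨(s:ℕ), hsv⟩).2
            simp only [Fin.snoc_castSucc, Fin.snoc_last, Fin.coe_castLE, Fin.val_mk]
            omega
    · intro j hj
      have hl := hlast j hj
      funext s
      refine Fin.lastCases ?_ ?_ s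
      · apply Fin.ext
        simp only [Fin.snoc_last, Fin.val_mk]
        omega
      · intro s'
        apply Fin.ext
        simp [Fin.snoc_castSucc]
    · intro i hi
      funext s
      apply Fin.ext
      simp [Fin.snoc_castSucc]
    · intro j hj
      have hl := hlast j hj
      rw [Fin.sum_univ_castSucc, hl]
  rw [← Finset.sum_filter_add_sum_filter_not (Jset 1 (m+2) (k+1))
    (fun j => ((j (Fin.last k) : ℕ) < m+2)), hA, hB,
    Finset.sum_add_distrib, Finset.sum_const, nsmul_eq_mul]
  ring



instance : CharZero (RatFunc ℚ) := by
  constructor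
  intro a b h
  have ha : ((a : ℚ) : RatFunc ℚ) = algebraMap (Polynomial ℚ) (RatFunc ℚ) ((a : ℕ) : Polynomial ℚ) := by
    simp
  have hb : ((b : ℚ) : RatFunc ℚ) = algebraMap (Polynomial ℚ) (RatFunc ℚ) ((b : ℕ) : Polynomial ℚ) := by
    simp
  have h2 : ((a : ℕ) : Polynomial ℚ) = ((b : ℕ) : Polynomial ℚ) := by
    apply RatFunc.algebraMap_injective
    simpa [ha, hb] using h
  exact_mod_cast h2

def wt (v : ℕ) : RatFunc ℚ :=
  ((X : RatFunc ℚ) + 1) * ((X : RatFunc ℚ) ^ (2 * (v : ℤ) - 2) + X ^ (2 - 2 * (v : ℤ)))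

lemma Gam_eq (h n k : ℕ) : Gam h n k = ∑ j ∈ Jset h n k, ∑ s, wt ((j s : ℕ)) := by
  unfold Gam wt
  exact Finset.sum_congr rfl fun j _ => by rw [Finset.mul_sum]

lemma Gam_zero (h n : ℕ) : Gam h n 0 = 0 := by
  simp [Gam]

lemma Gam_empty {n k : ℕ} (hnk : n < 2*(k+1)) : Gam 1 n (k+1) = 0 := by
  rw [Gam_eq, Jset_empty hnk, Finset.sum_empty]

lemma wt_eq (m : ℕ) : wt (m+2) = bRF ((m:ℤ)+2) - bRF ((m:ℤ)+1) := by
  have h := bRF_diff ((m:ℤ)+2)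
  have e : ((m:ℤ)+2) - 1 = (m:ℤ)+1 := by ring
  rw [e] at h
  rw [h, wt]
  push_cast
  ring_nf

lemma Jcard : ∀ n k, (Jset 1 n k).card = Nat.choose (n - k) k := by
  intro n
  induction n using Nat.strong_induction_on with
  | _ n ih =>
    intro k
    match k with
    | 0 =>
      have : (Jset 1 n 0) = (Finset.univ : Finset (Fin 0 → Fin (n+1))) := by
        rw [Finset.eq_univ_iff_forall]
        intro j
        simp only [Jset, Finset.mem_filter, Finset.mem_univ, true_and]
        exact ⟨fun s => absurd s.isLt (by omega), fun s t _ => absurd s.isLt (by omega)⟩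
      rw [this]
      simp
    | k+1 =>
      match n, ih with
      | 0, ih => rw [Jset_empty (by omega)]; simp [Nat.choose_eq_zero_of_lt]
      | 1, ih => rw [Jset_empty (by omega)]; simp [Nat.choose_eq_zero_of_lt]
      | (m+2), ih =>
        have hs := sum_split m k (fun _ => (1:RatFunc ℚ))
        simp only [Finset.sum_const, nsmul_eq_mul, mul_one, Finset.card_univ,
          Fintype.card_fin] at hs
        have hk1 : ((k:RatFunc ℚ) + 1) ≠ 0 := by
          have : (((k+1 : ℕ)) : RatFunc ℚ) ≠ 0 := Nat.cast_ne_zero.mpr (by omega)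
          push_cast at this
          exact this
        have hcard : ((Jset 1 (m+2) (k+1)).card : RatFunc ℚ)
            = ((Jset 1 (m+1) (k+1)).card : RatFunc ℚ) + ((Jset 1 m k).card : RatFunc ℚ) := by
          have expand : ((Jset 1 (m+2) (k+1)).card : RatFunc ℚ) * ((k:RatFunc ℚ)+1)
              = (((Jset 1 (m+1) (k+1)).card : RatFunc ℚ)
                + ((Jset 1 m k).card : RatFunc ℚ)) * ((k:RatFunc ℚ)+1) := by
            push_cast at hs ⊢
            linear_combination hs
          exact mul_right_cancel₀ hk1 expand
        have hnat : (Jset 1 (m+2) (k+1)).card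
            = (Jset 1 (m+1) (k+1)).card + (Jset 1 m k).card := by
          exact_mod_cast hcard
        rw [hnat, ih (m+1) (by omega) (k+1), ih m (by omega) k]
        rcases Nat.lt_or_ge m k with hmk | hmk
        · rw [Nat.choose_eq_zero_of_lt (by omega), Nat.choose_eq_zero_of_lt (by omega),
            Nat.choose_eq_zero_of_lt (by omega)]
        · have e1 : m + 2 - (k+1) = (m - k) + 1 := by omega
          have e2 : m + 1 - (k+1) = m - k := by omega
          rw [e1, e2, Nat.choose_succ_succ']
          omega

lemma Gam_rec (m k : ℕ) : Gam 1 (m+2) (k+1) = Gam 1 (m+1) (k+1) + Gam 1 m k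
    + (Nat.choose (m-k) k : RatFunc ℚ) * (bRF ((m:ℤ)+2) - bRF ((m:ℤ)+1)) := by
  rw [Gam_eq, Gam_eq, Gam_eq, sum_split m k wt, Jcard m k, wt_eq]

def RHSd (n k : ℕ) : RatFunc ℚ :=
  (∑ s ∈ Finset.range k, (-1 : RatFunc ℚ) ^ (k + s + 1) *
      (Nat.choose (n - 2 * k + s) s : RatFunc ℚ) * bRF ((n : ℤ) - k + s + 1))
  + ∑ r ∈ Finset.range k, (-1 : RatFunc ℚ) ^ (k + r) *
      (Nat.choose (n - 2 * k + r) r : RatFunc ℚ) * bRF ((k : ℤ) - r)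

lemma RHSd_zero (n : ℕ) : RHSd n 0 = 0 := by simp [RHSd]

lemma L5b (k : ℕ) : RHSd (2*k+2) (k+1)
    = RHSd (2*k) k + (bRF (((2*k+2 : ℕ)) : ℤ) - bRF (((2*k+1 : ℕ)) : ℤ)) := by
  unfold RHSd
  have B := fun t : ℕ => bRF (t : ℤ)
  have c1 : (∑ s ∈ Finset.range (k+1), (-1 : RatFunc ℚ) ^ ((k+1) + s + 1) *
      (Nat.choose (2*k+2 - 2 * (k+1) + s) s : RatFunc ℚ) * bRF (((2*k+2 : ℕ)) - ((k+1:ℕ)) + s + 1))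
      = ∑ s ∈ range (k+1), (-1:RatFunc ℚ)^(k+s) * (fun t : ℕ => bRF (t : ℤ)) (k+s+2) := by
    refine Finset.sum_congr rfl fun s hs => ?_
    have hA : 2*k+2 - 2*(k+1) + s = s := by omega
    have hZ : ((2*k+2 : ℕ) : ℤ) - ((k+1:ℕ) : ℤ) + (s:ℤ) + 1 = ((k+s+2 : ℕ) : ℤ) := by
      push_cast; ring
    rw [hA, hZ, Nat.choose_self]
    push_cast
    ring
  have c2 : (∑ r ∈ Finset.range (k+1), (-1 : RatFunc ℚ) ^ ((k+1) + r) *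
      (Nat.choose (2*k+2 - 2 * (k+1) + r) r : RatFunc ℚ) * bRF (((k+1 : ℕ)) - r))
      = ∑ r ∈ range (k+1), (-1:RatFunc ℚ)^(k+r+1) * (fun t : ℕ => bRF (t : ℤ)) (k+1-r) := by
    refine Finset.sum_congr rfl fun r hr => ?_
    have hrk := Finset.mem_range.mp hr
    have hA : 2*k+2 - 2*(k+1) + r = r := by omega
    have hZ : ((k+1:ℕ) : ℤ) - (r:ℤ) = ((k+1-r : ℕ) : ℤ) := by omega
    rw [hA, hZ, Nat.choose_self]
    push_cast
    ring
  have c3 : (∑ s ∈ Finset.range k, (-1 : RatFunc ℚ) ^ (k + s + 1) *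
      (Nat.choose (2*k - 2 * k + s) s : RatFunc ℚ) * bRF (((2*k : ℕ)) - ((k:ℕ)) + s + 1))
      = ∑ s ∈ range k, (-1:RatFunc ℚ)^(k+s+1) * (fun t : ℕ => bRF (t : ℤ)) (k+s+1) := by
    refine Finset.sum_congr rfl fun s hs => ?_
    have hA : 2*k - 2*k + s = s := by omega
    have hZ : ((2*k : ℕ) : ℤ) - ((k:ℕ) : ℤ) + (s:ℤ) + 1 = ((k+s+1 : ℕ) : ℤ) := by
      push_cast; ring
    rw [hA, hZ, Nat.choose_self]
    push_cast
    ring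
  have c4 : (∑ r ∈ Finset.range k, (-1 : RatFunc ℚ) ^ (k + r) *
      (Nat.choose (2*k - 2 * k + r) r : RatFunc ℚ) * bRF (((k : ℕ)) - r))
      = ∑ r ∈ range k, (-1:RatFunc ℚ)^(k+r) * (fun t : ℕ => bRF (t : ℤ)) (k-r) := by
    refine Finset.sum_congr rfl fun r hr => ?_
    have hrk := Finset.mem_range.mp hr
    have hA : 2*k - 2*k + r = r := by omega
    have hZ : ((k:ℕ) : ℤ) - (r:ℤ) = ((k-r : ℕ) : ℤ) := by omega
    rw [hA, hZ, Nat.choose_self]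
    push_cast
    ring
  rw [c1, c2, c3, c4]
  have h3 := part3 (fun t : ℕ => bRF (t : ℤ)) k
  have e1 : (((2*k+2 : ℕ)) : ℤ) = ((2*k+2 : ℕ) : ℤ) := rfl
  linear_combination h3

lemma L5a (k a' : ℕ) : RHSd (2*k+(a'+1)+2) (k+1)
    = RHSd (2*k+(a'+1)+1) (k+1) + RHSd (2*k+(a'+1)) k
      + (Nat.choose (a'+1+k) k : RatFunc ℚ)
        * (bRF (((2*k+(a'+1)+2 : ℕ)) : ℤ) - bRF (((2*k+(a'+1)+1 : ℕ)) : ℤ)) := by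
  unfold RHSd
  have c1 : (∑ s ∈ Finset.range (k+1), (-1 : RatFunc ℚ) ^ ((k+1) + s + 1) *
      (Nat.choose (2*k+(a'+1)+2 - 2 * (k+1) + s) s : RatFunc ℚ)
      * bRF (((2*k+(a'+1)+2 : ℕ)) - ((k+1:ℕ)) + s + 1))
      = ∑ s ∈ range (k+1), (-1:RatFunc ℚ)^(k+s) * (Nat.choose (a'+1+s) s : RatFunc ℚ)
          * (fun t : ℕ => bRF (t : ℤ)) (k+(a'+1)+s+2) := by
    refine Finset.sum_congr rfl fun s hs => ?_
    have hA : 2*k+(a'+1)+2 - 2*(k+1) + s = a'+1+s := by omega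
    have hZ : ((2*k+(a'+1)+2 : ℕ) : ℤ) - ((k+1:ℕ) : ℤ) + (s:ℤ) + 1 = ((k+(a'+1)+s+2 : ℕ) : ℤ) := by
      push_cast; ring
    rw [hA, hZ]
    push_cast
    ring
  have c2 : (∑ s ∈ Finset.range (k+1), (-1 : RatFunc ℚ) ^ ((k+1) + s + 1) *
      (Nat.choose (2*k+(a'+1)+1 - 2 * (k+1) + s) s : RatFunc ℚ)
      * bRF (((2*k+(a'+1)+1 : ℕ)) - ((k+1:ℕ)) + s + 1))
      = ∑ s ∈ range (k+1), (-1:RatFunc ℚ)^(k+s) * (Nat.choose (a'+s) s : RatFunc ℚ)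
          * (fun t : ℕ => bRF (t : ℤ)) (k+(a'+1)+s+1) := by
    refine Finset.sum_congr rfl fun s hs => ?_
    have hA : 2*k+(a'+1)+1 - 2*(k+1) + s = a'+s := by omega
    have hZ : ((2*k+(a'+1)+1 : ℕ) : ℤ) - ((k+1:ℕ) : ℤ) + (s:ℤ) + 1 = ((k+(a'+1)+s+1 : ℕ) : ℤ) := by
      push_cast; ring
    rw [hA, hZ]
    push_cast
    ring
  have c3 : (∑ s ∈ Finset.range k, (-1 : RatFunc ℚ) ^ (k + s + 1) *
      (Nat.choose (2*k+(a'+1) - 2 * k + s) s : RatFunc ℚ)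
      * bRF (((2*k+(a'+1) : ℕ)) - ((k:ℕ)) + s + 1))
      = -∑ s ∈ range k, (-1:RatFunc ℚ)^(k+s) * (Nat.choose (a'+1+s) s : RatFunc ℚ)
          * (fun t : ℕ => bRF (t : ℤ)) (k+(a'+1)+s+1) := by
    rw [← Finset.sum_neg_distrib]
    refine Finset.sum_congr rfl fun s hs => ?_
    have hA : 2*k+(a'+1) - 2*k + s = a'+1+s := by omega
    have hZ : ((2*k+(a'+1) : ℕ) : ℤ) - ((k:ℕ) : ℤ) + (s:ℤ) + 1 = ((k+(a'+1)+s+1 : ℕ) : ℤ) := by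
      push_cast; ring
    rw [hA, hZ]
    push_cast
    ring
  have d1 : (∑ r ∈ Finset.range (k+1), (-1 : RatFunc ℚ) ^ ((k+1) + r) *
      (Nat.choose (2*k+(a'+1)+2 - 2 * (k+1) + r) r : RatFunc ℚ) * bRF (((k+1 : ℕ)) - r))
      = ∑ r ∈ range (k+1), (-1:RatFunc ℚ)^(k+r+1) * (Nat.choose (a'+1+r) r : RatFunc ℚ)
          * (fun t : ℕ => bRF (t : ℤ)) (k+1-r) := by
    refine Finset.sum_congr rfl fun r hr => ?_
    have hrk := Finset.mem_range.mp hr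
    have hA : 2*k+(a'+1)+2 - 2*(k+1) + r = a'+1+r := by omega
    have hZ : ((k+1:ℕ) : ℤ) - (r:ℤ) = ((k+1-r : ℕ) : ℤ) := by omega
    rw [hA, hZ]
    push_cast
    ring
  have d2 : (∑ r ∈ Finset.range (k+1), (-1 : RatFunc ℚ) ^ ((k+1) + r) *
      (Nat.choose (2*k+(a'+1)+1 - 2 * (k+1) + r) r : RatFunc ℚ) * bRF (((k+1 : ℕ)) - r))
      = ∑ r ∈ range (k+1), (-1:RatFunc ℚ)^(k+r+1) * (Nat.choose (a'+r) r : RatFunc ℚ)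
          * (fun t : ℕ => bRF (t : ℤ)) (k+1-r) := by
    refine Finset.sum_congr rfl fun r hr => ?_
    have hrk := Finset.mem_range.mp hr
    have hA : 2*k+(a'+1)+1 - 2*(k+1) + r = a'+r := by omega
    have hZ : ((k+1:ℕ) : ℤ) - (r:ℤ) = ((k+1-r : ℕ) : ℤ) := by omega
    rw [hA, hZ]
    push_cast
    ring
  have d3 : (∑ r ∈ Finset.range k, (-1 : RatFunc ℚ) ^ (k + r) *
      (Nat.choose (2*k+(a'+1) - 2 * k + r) r : RatFunc ℚ) * bRF (((k : ℕ)) - r))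
      = -∑ r ∈ range k, (-1:RatFunc ℚ)^(k+r+1) * (Nat.choose (a'+1+r) r : RatFunc ℚ)
          * (fun t : ℕ => bRF (t : ℤ)) (k-r) := by
    rw [← Finset.sum_neg_distrib]
    refine Finset.sum_congr rfl fun r hr => ?_
    have hrk := Finset.mem_range.mp hr
    have hA : 2*k+(a'+1) - 2*k + r = a'+1+r := by omega
    have hZ : ((k:ℕ) : ℤ) - (r:ℤ) = ((k-r : ℕ) : ℤ) := by omega
    rw [hA, hZ]
    push_cast
    ring
  rw [c1, c2, c3, d1, d2, d3]
  have h1 := part1 (fun t : ℕ => bRF (t : ℤ)) k a'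
  have h2 := part2 (fun t : ℕ => bRF (t : ℤ)) k a'
  have hZ1 : ((2*k+(a'+1)+2 : ℕ) : ℤ) = ((2*k+(a'+1)+2 : ℕ) : ℤ) := rfl
  linear_combination h1 + h2

theorem stmt5' (n k : ℕ) (hn : 2 * k ≤ n) : Gam 1 n k = RHSd n k := by
  induction n using Nat.strong_induction_on generalizing k with
  | _ n ih =>
    match k with
    | 0 => rw [Gam_zero, RHSd_zero]
    | k+1 =>
      obtain ⟨m, rfl⟩ : ∃ m, n = m + 2 := ⟨n - 2, by omega⟩
      have hm : 2*k ≤ m := by omega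
      rw [Gam_rec m k]
      rcases Nat.eq_or_lt_of_le hm with heq | hlt
      · -- m = 2k
        subst heq
        rw [Gam_empty (by omega), ih (2*k) (by omega) k (by omega)]
        have hc : 2*k - k = k := by omega
        rw [hc, Nat.choose_self]
        have e1 : ((2*k : ℕ):ℤ) + 2 = (((2*k+2 : ℕ)) : ℤ) := by push_cast; ring
        have e2 : ((2*k : ℕ):ℤ) + 1 = (((2*k+1 : ℕ)) : ℤ) := by push_cast; ring
        rw [e1, e2, Nat.cast_one]
        linear_combination -L5b k
      · -- m > 2k
        obtain ⟨a', rfl⟩ : ∃ a', m = 2*k + (a'+1) := ⟨m - 2*k - 1, by omega⟩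
        rw [ih (2*k+(a'+1)+1) (by omega) (k+1) (by omega),
          ih (2*k+(a'+1)) (by omega) k (by omega)]
        have hc : 2*k+(a'+1) - k = a'+1+k := by omega
        rw [hc]
        have e1 : ((2*k+(a'+1) : ℕ):ℤ) + 2 = (((2*k+(a'+1)+2 : ℕ)) : ℤ) := by push_cast; ring
        have e2 : ((2*k+(a'+1) : ℕ):ℤ) + 1 = (((2*k+(a'+1)+1 : ℕ)) : ℤ) := by push_cast; ring
        rw [e1, e2]
        exact (L5a k a').symm

/-- Γ(1,n;k) = Σ_{s=0}^{k-1} (-1)^{k+s-1} C(n-2k+s, s) b_{n-k+s+1}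
             + Σ_{r=0}^{k-1} (-1)^{k+r} C(n-2k+r, r) b_{k-r}. -/
theorem stmt5 (n k : ℕ) (hk : 1 ≤ k) (hn : 2 * k ≤ n) :
    Gam 1 n k =
      (∑ s ∈ Finset.range k, (-1 : RatFunc ℚ) ^ (k + s + 1) *
          (Nat.choose (n - 2 * k + s) s : RatFunc ℚ) * bRF ((n : ℤ) - k + s + 1))
      + ∑ r ∈ Finset.range k, (-1 : RatFunc ℚ) ^ (k + r) *
          (Nat.choose (n - 2 * k + r) r : RatFunc ℚ) * bRF ((k : ℤ) - r) := by
  exact stmt5' n k hn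
end
end

section
/- For the symplectic root system C_n with positive roots {e_i ± e_j : i < j} ∪ {2e_j} and ρ = Σ_j (n-j+1)e_j, a weight of the form w·ω_{2k} (w in the Weyl group, ω_{2k} = e_1+...+e_{2k}) satisfies w·ω_{2k} + ρ ∈ W·ρ (conjugate to 0) if and only if its nonzero coordinates consist of exactly k pairs of consecutive coordinates of the form (-1, 1); in that case the permutation σ ∈ S_n with σ(w·ω_{2k} + ρ) = ρ has length k, and the number of such weights is binomial(n-k, k). -/
/-!
Signs cannot help: `μ + ρ` has entries `≥ 0` and `ρ` has entries `≥ 1`, so `μ + ρ ∈ W·ρ` means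
`μ + ρ = ρ ∘ τ` for a permutation `τ`, i.e. `μ j = j - τ j`. For `μ ∈ W·ω_{2k}` the entries lie in
`{-1, 0, 1}`, so `τ` moves every point by at most one. Such a permutation is a product of disjoint
adjacent transpositions `(j, j + 1)`, one for each entry `-1` of `μ`, and its inversions are exactly
these transpositions. The weights are therefore indexed by the `k`-subsets of `{0, …, n - 2}`
without two consecutive elements, which satisfy Pascal's recursion
`a(m + 2, k + 1) = a(m + 1, k + 1) + a(m, k)` and hence number `(n - k).choose k`.
-/

open Finset

/-- The action of the hyperoctahedral Weyl group element (σ, ε) (a permutation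
together with sign changes) on a vector in ℚⁿ. -/
def signAct {n : ℕ} (σ : Equiv.Perm (Fin n)) (ε : Fin n → ℚ) (v : Fin n → ℚ) : Fin n → ℚ :=
  fun i => ε i * v (σ⁻¹ i)

/-- ε is a choice of signs. -/
def IsSign {n : ℕ} (ε : Fin n → ℚ) : Prop := ∀ i, ε i = 1 ∨ ε i = -1

/-- μ has all coordinates zero except for exactly k pairwise disjoint pairs of
consecutive coordinates of the form (-1, 1). -/
def PairsShape {n : ℕ} (k : ℕ) (μ : Fin n → ℚ) : Prop :=
  ∃ J : Finset (Fin n), J.card = k ∧ (∀ j ∈ J, (j : ℕ) + 1 < n) ∧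
    (∀ j ∈ J, ∀ j' ∈ J, (j : ℕ) + 1 ≠ (j' : ℕ)) ∧
    (∀ j ∈ J, μ j = -1) ∧
    (∀ i : Fin n, (∃ j ∈ J, (i : ℕ) = (j : ℕ) + 1) → μ i = 1) ∧
    (∀ i : Fin n, i ∉ J → (∀ j ∈ J, (i : ℕ) ≠ (j : ℕ) + 1) → μ i = 0)

def sparseSets (m k : ℕ) : Finset (Finset ℕ) :=
  ((range m).powersetCard k).filter fun S => ∀ a ∈ S, a + 1 ∉ S

lemma mem_sparseSets {m k : ℕ} {S : Finset ℕ} :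
    S ∈ sparseSets m k ↔ (∀ a ∈ S, a < m) ∧ #S = k ∧ ∀ a ∈ S, a + 1 ∉ S := by
  simp [sparseSets, mem_powersetCard, subset_iff, and_assoc]

lemma sparseSets_of_le_one {m : ℕ} (hm : m ≤ 1) (k : ℕ) :
    sparseSets m k = (range m).powersetCard k :=
  filter_true_of_mem fun S hS a ha ha' => by
    have := mem_range.mp ((mem_powersetCard.mp hS).1 ha')
    omega

lemma filter_notMem_sparseSets (m k : ℕ) :
    {S ∈ sparseSets (m + 2) k | m + 1 ∉ S} = sparseSets (m + 1) k := by
  ext S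
  simp only [mem_filter, mem_sparseSets]
  constructor
  · rintro ⟨⟨hS, hk, hsp⟩, hm⟩
    exact ⟨fun a ha => by have := hS a ha; grind, hk, hsp⟩
  · rintro ⟨hS, hk, hsp⟩
    exact ⟨⟨fun a ha => by have := hS a ha; omega, hk, hsp⟩, fun h => by have := hS _ h; omega⟩

lemma card_filter_mem_sparseSets (m k : ℕ) :
    #{S ∈ sparseSets (m + 2) (k + 1) | m + 1 ∈ S} = #(sparseSets m k) := by
  refine card_nbij' (fun S => S.erase (m + 1)) (insert (m + 1)) (fun S hS => ?_) (fun S hS => ?_)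
    (fun S hS => insert_erase (mem_filter.mp hS).2) (fun S hS => ?_)
  · simp only [coe_filter, Set.mem_ofPred_eq, mem_coe, mem_sparseSets] at hS ⊢
    obtain ⟨⟨hS, hk, hsp⟩, hm⟩ := hS
    refine ⟨fun a ha => ?_, by rw [card_erase_of_mem hm, hk]; rfl, fun a ha h => ?_⟩
    · have := hS a (mem_of_mem_erase ha)
      have := hsp m
      grind
    · exact hsp a (mem_of_mem_erase ha) (mem_of_mem_erase h)
  · simp only [coe_filter, Set.mem_ofPred_eq, mem_sparseSets, mem_coe] at hS ⊢
    obtain ⟨hS, hk, hsp⟩ := hS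
    have hm : m + 1 ∉ S := fun h => by have := hS _ h; omega
    refine ⟨⟨fun a ha => ?_, by rw [card_insert_of_notMem hm, hk], fun a ha h => ?_⟩,
      mem_insert_self _ _⟩
    · rcases mem_insert.mp ha with rfl | ha
      · omega
      · have := hS a ha; omega
    · rcases mem_insert.mp ha with rfl | ha <;> rcases mem_insert.mp h with h | h
      · omega
      · have := hS _ h; omega
      · have := hS _ ha; omega
      · exact hsp a ha h
  · exact erase_insert fun h => by have := (mem_sparseSets.mp hS).1 _ h; omega

lemma card_sparseSets_add_two (m k : ℕ) :
    #(sparseSets (m + 2) (k + 1)) = #(sparseSets (m + 1) (k + 1)) + #(sparseSets m k) := by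
  rw [← card_filter_add_card_filter_not (fun S => m + 1 ∈ S), filter_notMem_sparseSets,
    card_filter_mem_sparseSets, add_comm]

theorem card_sparseSets (m k : ℕ) : #(sparseSets m k) = (m + 1 - k).choose k := by
  induction m using Nat.twoStepInduction generalizing k with
  | zero => rw [sparseSets_of_le_one zero_le_one]; cases k <;> simp
  | one =>
    rw [sparseSets_of_le_one le_rfl]
    rcases k with _ | _ | k <;> simp [Nat.choose_eq_zero_of_lt]
  | more m ih₀ ih₁ =>
    cases k with
    | zero => simp [sparseSets, filter_singleton]
    | succ k =>
      rw [card_sparseSets_add_two, ih₀, ih₁]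
      obtain h | h := le_or_gt k (m + 1)
      · rw [show m + 2 + 1 - (k + 1) = m + 1 - k + 1 by omega,
          show m + 1 + 1 - (k + 1) = m + 1 - k by omega, Nat.choose_succ_succ', add_comm]
      · rw [Nat.choose_eq_zero_of_lt (by omega), Nat.choose_eq_zero_of_lt (by omega),
          Nat.choose_eq_zero_of_lt (by omega)]

namespace Equiv.Perm

variable {n : ℕ} {τ : Perm (Fin n)}

def MovesAtMostOne (τ : Perm (Fin n)) : Prop :=
  ∀ i, (τ i : ℕ) ≤ i + 1 ∧ (i : ℕ) ≤ τ i + 1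

namespace MovesAtMostOne

lemma inv (hτ : MovesAtMostOne τ) : MovesAtMostOne τ⁻¹ := fun i => by
  have := hτ (τ⁻¹ i)
  rw [show τ (τ⁻¹ i) = i from τ.apply_symm_apply i] at this
  omega

/-- A point moved up is swapped with its successor: otherwise the point mapped onto `i` would be
`i - 1`, and `i - 1` would already be moved up. -/
lemma apply_apply_of_apply_eq_succ (hτ : MovesAtMostOne τ) {i : Fin n}
    (hi : (τ i : ℕ) = i + 1) : τ (τ i) = i := by
  induction hv : (i : ℕ) using Nat.strong_induction_on generalizing i with
  | _ m ih =>
    set j := τ⁻¹ i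
    have hτj : τ j = i := τ.apply_symm_apply i
    have hji : (j : ℕ) ≠ i := fun h => by rw [Fin.val_inj.mp h] at hτj; rw [hτj] at hi; omega
    have hbound := hτ j
    rw [hτj] at hbound
    obtain hsucc | hpred : (j : ℕ) = i + 1 ∨ (j : ℕ) + 1 = i := by omega
    · rwa [show τ i = j from Fin.ext (by omega)]
    · have hτi := ih j (by omega) (by rw [hτj]; omega) rfl
      rw [hτj] at hτi
      rw [hτi] at hi
      omega

lemma involutive (hτ : MovesAtMostOne τ) : Function.Involutive τ := by
  intro i
  obtain hup | hfix | hdown : (τ i : ℕ) = i + 1 ∨ τ i = i ∨ (τ i : ℕ) + 1 = i := by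
    have := hτ i
    have := @Fin.val_inj _ (τ i) i
    omega
  · exact hτ.apply_apply_of_apply_eq_succ hup
  · rw [hfix, hfix]
  · have hi : τ⁻¹ (τ i) = i := τ.symm_apply_apply i
    have h := hτ.inv.apply_apply_of_apply_eq_succ (i := τ i) (by rw [hi]; omega)
    rw [hi] at h
    rw [← h]
    exact τ.apply_symm_apply i

lemma eq_succ_of_inversion (hτ : MovesAtMostOne τ) {i j : Fin n} (hij : i < j) (hτij : τ j < τ i) :
    (τ i : ℕ) = i + 1 ∧ (j : ℕ) = i + 1 := by
  have := hτ i; have := hτ j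
  rw [Fin.lt_def] at hij hτij
  omega

lemma card_inversions (hτ : MovesAtMostOne τ) :
    #{p : Fin n × Fin n | p.1 < p.2 ∧ τ p.2 < τ p.1} = #{i | (τ i : ℕ) = i + 1} := by
  symm
  refine card_nbij' (fun i => (i, τ i)) Prod.fst (fun i hi => ?_) (fun p hp => ?_)
    (fun i _ => rfl) (fun p hp => ?_)
  · simp only [coe_filter, mem_univ, true_and, Set.mem_ofPred_eq] at hi ⊢
    rw [hτ.apply_apply_of_apply_eq_succ hi]
    omega
  · simp only [coe_filter, mem_univ, true_and, Set.mem_ofPred_eq] at hp ⊢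
    exact (hτ.eq_succ_of_inversion hp.1 hp.2).1
  · simp only [coe_filter, mem_univ, true_and, Set.mem_ofPred_eq] at hp
    have := hτ.eq_succ_of_inversion hp.1 hp.2
    exact Prod.ext rfl (Fin.ext (by dsimp only; omega))

lemma card_moved (hτ : MovesAtMostOne τ) :
    #{i | τ i ≠ i} = 2 * #{i | (τ i : ℕ) = i + 1} := by
  have hsplit : univ.filter (fun i => τ i ≠ i) =
      univ.filter (fun i => (τ i : ℕ) = i + 1) ∪ univ.filter (fun i => (τ i : ℕ) + 1 = i) := by
    ext i
    have := hτ i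
    have := @Fin.val_inj _ (τ i) i
    simp only [mem_filter, mem_univ, true_and, mem_union]
    omega
  have hdown : #{i | (τ i : ℕ) + 1 = i} = #{i | (τ i : ℕ) = i + 1} := by
    refine card_nbij' τ τ (fun i hi => ?_) (fun i hi => ?_) (fun i _ => hτ.involutive i)
      (fun i _ => hτ.involutive i) <;>
    · simp only [coe_filter, mem_univ, true_and, Set.mem_ofPred_eq] at hi ⊢
      rw [hτ.involutive i]
      omega
  rw [hsplit, card_union_of_disjoint (disjoint_filter.mpr fun i _ h h' => by omega), hdown,
    two_mul]

end MovesAtMostOne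

end Equiv.Perm

open Equiv Perm

section Displacement

variable {n : ℕ}

def rho (n : ℕ) : Fin n → ℚ := fun j => (n : ℚ) - (j : ℕ)

def displacement (τ : Perm (Fin n)) : Fin n → ℚ := fun j => (j : ℕ) - (τ j : ℕ)

variable {τ : Perm (Fin n)} {j : Fin n}

lemma displacement_eq_neg_one_iff : displacement τ j = -1 ↔ (τ j : ℕ) = j + 1 := by
  rw [displacement]; constructor <;> intro h <;> qify at * <;> linarith

lemma displacement_eq_zero_iff : displacement τ j = 0 ↔ τ j = j := by
  rw [displacement, ← Fin.val_inj]; constructor <;> intro h <;> qify at * <;> linarith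

lemma card_displacement_ne_zero (τ : Perm (Fin n)) :
    #{j | displacement τ j ≠ 0} = #{j | τ j ≠ j} := by
  simp only [ne_eq, displacement_eq_zero_iff]

lemma movesAtMostOne_iff_displacement :
    MovesAtMostOne τ ↔
      ∀ j, displacement τ j = -1 ∨ displacement τ j = 0 ∨ displacement τ j = 1 := by
  refine forall_congr' fun j => ?_
  simp only [displacement]
  constructor
  · rintro ⟨h₁, h₂⟩
    obtain h | h | h : (τ j : ℕ) = j + 1 ∨ (τ j : ℕ) = j ∨ (τ j : ℕ) + 1 = j := by omega
    · left; qify at h; linarith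
    · right; left; qify at h; linarith
    · right; right; qify at h; linarith
  · rintro (h | h | h) <;> qify at * <;> constructor <;> linarith

lemma comp_inv_add_rho_eq_rho_iff {μ : Fin n → ℚ} :
    (fun i => (μ + rho n) (τ⁻¹ i)) = rho n ↔ μ = displacement τ := by
  simp only [funext_iff, Pi.add_apply, rho, displacement]
  constructor
  · intro h j
    have := h (τ j)
    rw [show τ⁻¹ (τ j) = j from τ.symm_apply_apply j] at this
    linarith
  · intro h i
    rw [h, show τ (τ⁻¹ i) = i from τ.apply_symm_apply i]
    ring

lemma exists_signAct_add_rho_eq_rho_iff {μ : Fin n → ℚ} (hμ : ∀ j, -1 ≤ μ j) :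
    (∃ σ ε, IsSign ε ∧ signAct σ ε (μ + rho n) = rho n) ↔
      ∃ τ : Perm (Fin n), μ = displacement τ := by
  simp only [← comp_inv_add_rho_eq_rho_iff]
  constructor
  · rintro ⟨σ, ε, hε, h⟩
    refine ⟨σ, funext fun i => ?_⟩
    have hi := congrFun h i
    have hρ : ∀ j : Fin n, 1 ≤ rho n j := fun j => by
      have : (j : ℕ) + 1 ≤ n := j.isLt
      simp only [rho]; qify at this; linarith
    simp only [signAct] at hi
    rcases hε i with h1 | h1
    · rw [h1, one_mul] at hi; exact hi
    · have := hμ (σ⁻¹ i); have := hρ (σ⁻¹ i); have := hρ i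
      rw [h1, Pi.add_apply] at hi
      linarith
  · rintro ⟨τ, h⟩
    exact ⟨τ, fun _ => 1, fun _ => Or.inl rfl, (funext fun _ => one_mul _).trans h⟩

end Displacement

theorem exists_signAct_indicator_iff {n m : ℕ} (hm : m ≤ n) {μ : Fin n → ℚ} :
    (∃ σ ε, IsSign ε ∧ μ = signAct σ ε (fun i : Fin n => if (i : ℕ) < m then 1 else 0)) ↔
      (∀ j, μ j = -1 ∨ μ j = 0 ∨ μ j = 1) ∧ #{j | μ j ≠ 0} = m := by
  have hcard : #{i : Fin n | (i : ℕ) < m} = m := by rw [Fin.card_filter_val_lt, min_eq_right hm]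
  constructor
  · rintro ⟨σ, ε, hε, rfl⟩
    refine ⟨fun j => ?_, ?_⟩
    · rcases hε j with h | h <;> simp only [signAct, h] <;> split_ifs <;> norm_num
    · calc #{j | signAct σ ε _ j ≠ 0}
          = #(({i | (i : ℕ) < m} : Finset (Fin n)).map σ.toEmbedding) := by
            congr 1
            ext j
            rw [mem_map_equiv]
            rcases hε j with h | h <;> simp [signAct, h]
        _ = m := by rw [card_map, hcard]
  · rintro ⟨hμ, hsupp⟩
    obtain ⟨σ, hσ⟩ := Equiv.Perm.exists_map_finset_eq _ _ (hcard.trans hsupp.symm)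
    have hj : ∀ j, (σ.symm j : ℕ) < m ↔ μ j ≠ 0 := fun j => by
      simpa [mem_map_equiv] using Finset.ext_iff.mp hσ j
    refine ⟨σ, fun j => if μ j = 0 then 1 else μ j, fun j => ?_, funext fun j => ?_⟩
    · rcases hμ j with h | h | h <;> simp [h]
    · by_cases h : μ j = 0 <;> simp [signAct, h, hj]

lemma pairsShape_displacement {n k : ℕ} {τ : Perm (Fin n)} (hτ : MovesAtMostOne τ)
    (hk : #{j | τ j ≠ j} = 2 * k) : PairsShape k (displacement τ) := by
  refine ⟨({j | (τ j : ℕ) = j + 1} : Finset (Fin n)), ?_, fun j hj => ?_,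
    fun j hj j' hj' hjj' => ?_, fun j hj => displacement_eq_neg_one_iff.mpr (mem_filter.mp hj).2,
    ?_, fun i hi hi' => ?_⟩
  · rw [hτ.card_moved] at hk
    omega
  · rw [mem_filter] at hj
    omega
  · simp only [mem_filter, mem_univ, true_and] at hj hj'
    have := hτ.apply_apply_of_apply_eq_succ hj
    rw [show τ j = j' from Fin.ext (by omega)] at this
    omega
  · rintro i ⟨j, hj, hij⟩
    rw [mem_filter] at hj
    have hτi := hτ.apply_apply_of_apply_eq_succ hj.2
    rw [show τ j = i from Fin.ext (by omega)] at hτi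
    simp only [displacement, hτi]
    qify at hij
    linarith
  · simp only [mem_filter, mem_univ, true_and] at hi hi'
    rw [displacement_eq_zero_iff]
    by_contra hne
    have := hτ i
    have := hi' (τ i) (by rw [hτ.involutive i]; omega)
    omega

section PairSwap

variable {S : Finset ℕ}

def pairSwap (S : Finset ℕ) (i : ℕ) : ℕ :=
  if i ∈ S then i + 1 else if ∃ j ∈ S, i = j + 1 then i - 1 else i

lemma pairSwap_eq_succ_iff {i : ℕ} : pairSwap S i = i + 1 ↔ i ∈ S := by
  unfold pairSwap; split_ifs <;> simp_all

lemma pairSwap_le (i : ℕ) : pairSwap S i ≤ i + 1 ∧ i ≤ pairSwap S i + 1 := by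
  unfold pairSwap; split_ifs <;> omega

lemma pairSwap_lt {n i : ℕ} (hS : ∀ a ∈ S, a < n - 1) (hi : i < n) : pairSwap S i < n := by
  unfold pairSwap; split_ifs with h <;> first | omega | (have := hS i h; omega)

lemma pairSwap_involutive (hS : ∀ a ∈ S, a + 1 ∉ S) : Function.Involutive (pairSwap S) := by
  intro i
  by_cases hi : i ∈ S
  · simp [pairSwap, hi, hS i hi]
  · by_cases h : ∃ j ∈ S, i = j + 1
    · obtain ⟨j, hj, rfl⟩ := h
      simp [pairSwap, hi, hj]
    · simp only [pairSwap, hi, h, if_false]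

end PairSwap

def pairsWeight (n : ℕ) (S : Finset ℕ) : Fin n → ℚ := fun i => (i : ℕ) - (pairSwap S i : ℕ)

lemma card_filter_val_mem {n : ℕ} {S : Finset ℕ} (hS : ∀ a ∈ S, a < n) :
    #{j : Fin n | (j : ℕ) ∈ S} = #S := by
  rw [← card_attachFin S hS]
  congr 1
  ext j
  simp [mem_attachFin]

lemma exists_perm_of_mem_sparseSets {n k : ℕ} {S : Finset ℕ} (hS : S ∈ sparseSets (n - 1) k) :
    ∃ τ : Perm (Fin n), MovesAtMostOne τ ∧ #{j | τ j ≠ j} = 2 * k ∧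
      displacement τ = pairsWeight n S := by
  obtain ⟨hlt, hcard, hsparse⟩ := mem_sparseSets.mp hS
  let g : Fin n → Fin n := fun i => ⟨pairSwap S i, pairSwap_lt hlt i.isLt⟩
  have hg : Function.Involutive g := fun i => Fin.ext (pairSwap_involutive hsparse i)
  have hτ : MovesAtMostOne hg.toPerm := fun i => pairSwap_le (S := S) i
  refine ⟨hg.toPerm, hτ, ?_, rfl⟩
  rw [hτ.card_moved, ← hcard, ← card_filter_val_mem (n := n) fun a ha => by have := hlt a ha; omega]
  congr 2
  ext j
  simp [g, pairSwap_eq_succ_iff]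

lemma exists_sparseSets_of_pairsShape {n k : ℕ} {μ : Fin n → ℚ} (h : PairsShape k μ) :
    ∃ S ∈ sparseSets (n - 1) k, pairsWeight n S = μ := by
  obtain ⟨J, hcard, hlt, hsparse, hneg, hpos, hzero⟩ := h
  refine ⟨J.map Fin.valEmbedding, mem_sparseSets.mpr ⟨?_, by rw [card_map, hcard], ?_⟩, ?_⟩
  · simp only [mem_map, Fin.valEmbedding_apply]
    rintro _ ⟨j, hj, rfl⟩
    have := hlt j hj
    omega
  · simp only [mem_map, Fin.valEmbedding_apply]
    rintro _ ⟨j, hj, rfl⟩ ⟨j', hj', hjj'⟩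
    exact hsparse j hj j' hj' hjj'.symm
  · funext i
    have hmem : (i : ℕ) ∈ J.map Fin.valEmbedding ↔ i ∈ J := by simp [Fin.val_inj]
    have hsucc : (∃ a ∈ J.map Fin.valEmbedding, (i : ℕ) = a + 1) ↔ ∃ j ∈ J, (i : ℕ) = j + 1 := by
      simp
    simp only [pairsWeight, pairSwap, hmem, hsucc]
    split_ifs with hi hi'
    · rw [hneg i hi]; push_cast; ring
    · rw [hpos i hi']
      obtain ⟨j, _, hij⟩ := hi'
      rw [Nat.cast_sub (by omega)]; ring
    · simp only [not_exists, not_and] at hi'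
      rw [hzero i hi hi']; ring

lemma pairsWeight_injOn (n : ℕ) : Set.InjOn (pairsWeight n) {S | ∀ a ∈ S, a < n} := by
  intro S hS T hT h
  ext a
  by_cases ha : a < n
  · have := congrFun h ⟨a, ha⟩
    simp only [pairsWeight, sub_right_inj, Nat.cast_inj] at this
    rw [← pairSwap_eq_succ_iff, ← pairSwap_eq_succ_iff, this]
  · exact iff_of_false (fun h => ha (hS a h)) (fun h => ha (hT a h))

lemma pairsShape_iff_exists_displacement {n k : ℕ} {μ : Fin n → ℚ} :
    PairsShape k μ ↔
      ∃ τ : Perm (Fin n), MovesAtMostOne τ ∧ #{j | τ j ≠ j} = 2 * k ∧ μ = displacement τ := by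
  constructor
  · intro h
    obtain ⟨S, hS, rfl⟩ := exists_sparseSets_of_pairsShape h
    obtain ⟨τ, hτ, hmoved, hτS⟩ := exists_perm_of_mem_sparseSets hS
    exact ⟨τ, hτ, hmoved, hτS.symm⟩
  · rintro ⟨τ, hτ, hmoved, rfl⟩
    exact pairsShape_displacement hτ hmoved

theorem ncard_setOf_pairsShape (n k : ℕ) :
    {μ : Fin n → ℚ | PairsShape k μ}.ncard = (n - k).choose k := by
  have hset : {μ : Fin n → ℚ | PairsShape k μ} = pairsWeight n '' ↑(sparseSets (n - 1) k) := by
    ext μ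
    refine ⟨exists_sparseSets_of_pairsShape, ?_⟩
    rintro ⟨S, hS, rfl⟩
    obtain ⟨τ, hτ, hmoved, hτS⟩ := exists_perm_of_mem_sparseSets hS
    show PairsShape k (pairsWeight n S)
    rw [← hτS]
    exact pairsShape_displacement hτ hmoved
  have hsub : ↑(sparseSets (n - 1) k) ⊆ {S : Finset ℕ | ∀ a ∈ S, a < n} := fun S hS a ha => by
    have := (mem_sparseSets.mp hS).1 a ha
    omega
  rw [hset, ((pairsWeight_injOn n).mono hsub).ncard_image, Set.ncard_coe_finset, card_sparseSets]
  rcases n with _ | n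
  · rcases k with _ | _ | k <;> simp
  · simp

theorem orbit_and_conj_iff {n m : ℕ} (hm : m ≤ n) {μ : Fin n → ℚ} :
    ((∃ σ ε, IsSign ε ∧ μ = signAct σ ε (fun i : Fin n => if (i : ℕ) < m then 1 else 0)) ∧
        ∃ σ ε, IsSign ε ∧ signAct σ ε (μ + rho n) = rho n) ↔
      ∃ τ : Perm (Fin n), MovesAtMostOne τ ∧ #{j | τ j ≠ j} = m ∧ μ = displacement τ := by
  rw [exists_signAct_indicator_iff hm]
  constructor
  · rintro ⟨⟨hμ, hsupp⟩, hconj⟩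
    have hge : ∀ j, -1 ≤ μ j := fun j => by rcases hμ j with h | h | h <;> rw [h] <;> norm_num
    obtain ⟨τ, rfl⟩ := (exists_signAct_add_rho_eq_rho_iff hge).mp hconj
    exact ⟨τ, movesAtMostOne_iff_displacement.mpr hμ,
      (card_displacement_ne_zero τ).symm.trans hsupp, rfl⟩
  · rintro ⟨τ, hτ, hmoved, rfl⟩
    have hμ := movesAtMostOne_iff_displacement.mp hτ
    have hge : ∀ j, -1 ≤ displacement τ j := fun j => by
      rcases hμ j with h | h | h <;> rw [h] <;> norm_num
    exact ⟨⟨hμ, (card_displacement_ne_zero τ).trans hmoved⟩,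
      (exists_signAct_add_rho_eq_rho_iff hge).mpr ⟨τ, rfl⟩⟩

theorem stmt19_general (n k : ℕ) (hk : 2 * k ≤ n) :
    (let ρ : Fin n → ℚ := fun j => (n : ℚ) - (j : ℕ)
     let ω : Fin n → ℚ := fun i => if (i : ℕ) < 2 * k then 1 else 0
     (∀ μ : Fin n → ℚ, (∃ σ ε, IsSign ε ∧ μ = signAct σ ε ω) →
        ((∃ σ ε, IsSign ε ∧ signAct σ ε (μ + ρ) = ρ) ↔ PairsShape k μ)) ∧
     (∀ μ : Fin n → ℚ, (∃ σ ε, IsSign ε ∧ μ = signAct σ ε ω) →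
        (∃ σ ε, IsSign ε ∧ signAct σ ε (μ + ρ) = ρ) →
        ∃ τ : Equiv.Perm (Fin n), (fun i => (μ + ρ) (τ⁻¹ i)) = ρ ∧
          (Finset.univ.filter
              (fun p : Fin n × Fin n => p.1 < p.2 ∧ τ p.2 < τ p.1)).card = k) ∧
     Set.ncard {μ : Fin n → ℚ |
        (∃ σ ε, IsSign ε ∧ μ = signAct σ ε ω) ∧
        (∃ σ ε, IsSign ε ∧ signAct σ ε (μ + ρ) = ρ)} = Nat.choose (n - k) k) := by
  intro ρ ω
  have hchar : ∀ μ, ((∃ σ ε, IsSign ε ∧ μ = signAct σ ε ω) ∧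
      ∃ σ ε, IsSign ε ∧ signAct σ ε (μ + ρ) = ρ) ↔ PairsShape k μ :=
    fun μ => (orbit_and_conj_iff hk).trans pairsShape_iff_exists_displacement.symm
  refine ⟨fun μ horb => ⟨fun hconj => (hchar μ).mp ⟨horb, hconj⟩, fun hμ => ((hchar μ).mpr hμ).2⟩,
    fun μ horb hconj => ?_, ?_⟩
  · obtain ⟨τ, hτ, hmoved, rfl⟩ := (orbit_and_conj_iff hk).mp ⟨horb, hconj⟩
    refine ⟨τ, comp_inv_add_rho_eq_rho_iff.mpr rfl, ?_⟩
    rw [hτ.card_moved] at hmoved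
    rw [hτ.card_inversions]
    omega
  · rw [← ncard_setOf_pairsShape n k]
    congr 1
    ext μ
    exact hchar μ

/-- For the root system Cₙ with ρ = (n, n-1, …, 1) and ω_{2k} = e₁ + ⋯ + e_{2k}:
a weight μ = w·ω_{2k} is conjugate to 0 (i.e. μ + ρ ∈ W·ρ) iff its nonzero
coordinates consist of exactly k pairs of consecutive coordinates (-1, 1);
in that case there is a permutation σ ∈ Sₙ with σ(μ+ρ) = ρ of length
(number of inversions) k; and the number of such weights is binomial(n-k, k). -/
theorem stmt19 (n k : ℕ) (hk : 2 * k ≤ n) (hn : 1 ≤ n) :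
    (let ρ : Fin n → ℚ := fun j => (n : ℚ) - (j : ℕ)
     let ω : Fin n → ℚ := fun i => if (i : ℕ) < 2 * k then 1 else 0
     (∀ μ : Fin n → ℚ, (∃ σ ε, IsSign ε ∧ μ = signAct σ ε ω) →
        ((∃ σ ε, IsSign ε ∧ signAct σ ε (μ + ρ) = ρ) ↔ PairsShape k μ)) ∧
     (∀ μ : Fin n → ℚ, (∃ σ ε, IsSign ε ∧ μ = signAct σ ε ω) →
        (∃ σ ε, IsSign ε ∧ signAct σ ε (μ + ρ) = ρ) →
        ∃ τ : Equiv.Perm (Fin n), (fun i => (μ + ρ) (τ⁻¹ i)) = ρ ∧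
          (Finset.univ.filter
              (fun p : Fin n × Fin n => p.1 < p.2 ∧ τ p.2 < τ p.1)).card = k) ∧
     Set.ncard {μ : Fin n → ℚ |
        (∃ σ ε, IsSign ε ∧ μ = signAct σ ε ω) ∧
        (∃ σ ε, IsSign ε ∧ signAct σ ε (μ + ρ) = ρ)} = Nat.choose (n - k) k) :=
  stmt19_general n k hk
end
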